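/- If κ > 0 is real and β₁₂ = √(2π)·e^{-πκ/2}·e^{iπ/4} / (-ξ·conj(r)·Γ(-iκ)) where r ∈ ℂ satisfies ξ|r|² = 1 - e^{-2πκ} with ξ < 0 excluded (ξ ≠ 0, ξ|r|² < 1), then |β₁₂|² = κ/ξ. -/

import Mathlib

/-!
Euler's reflection formula at `z = iκ`, together with `Γ(1 - iκ) = -iκ Γ(-iκ)` and
`Γ(-iκ) = conj Γ(iκ)`, gives `|Γ(±iκ)|² = π / (κ sinh πκ)`. Hence
`|β₁₂|² = 2 e^{-πκ} κ sinh(πκ) / (ξ² |r|²)`, and the numerator `2 e^{-πκ} sinh(πκ)` is exactly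
`1 - e^{-2πκ} = ξ |r|²`.
-/

open Complex Real ComplexConjugate

theorem norm_Gamma_I_mul_ofReal_sq {κ : ℝ} (hκ : κ ≠ 0) :
    ‖Gamma (I * κ)‖ ^ 2 = π / (κ * Real.sinh (π * κ)) := by
  have hsinh : Real.sinh (π * κ) ≠ 0 := by
    rw [Ne, Real.sinh_eq_zero]; exact mul_ne_zero pi_ne_zero hκ
  have hconj : Gamma (-(I * κ)) = conj (Gamma (I * κ)) := by
    rw [← Gamma_conj]; simp
  have hrec : Gamma (1 - I * κ) = -(I * κ) * Gamma (-(I * κ)) := by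
    rw [← Gamma_add_one _ (by simp [hκ])]; ring_nf
  have hsin : sin (π * (I * κ)) = Real.sinh (π * κ) * I := by
    rw [ofReal_sinh, ← sin_mul_I]; push_cast; ring_nf
  have hrefl := Gamma_mul_Gamma_one_sub (I * κ)
  rw [hrec, hconj, hsin, mul_left_comm, mul_conj,
    eq_div_iff (mul_ne_zero (ofReal_ne_zero.2 hsinh) I_ne_zero)] at hrefl
  have hnormSq : (normSq (Gamma (I * κ)) * (κ * Real.sinh (π * κ)) : ℂ) = π := by
    linear_combination (normSq (Gamma (I * κ)) * κ * Real.sinh (π * κ) : ℂ) * I_sq + hrefl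
  rw [Complex.sq_norm, eq_div_iff (mul_ne_zero hκ hsinh)]
  exact_mod_cast hnormSq

theorem norm_Gamma_neg_I_mul_ofReal_sq {κ : ℝ} (hκ : κ ≠ 0) :
    ‖Gamma (-(I * κ))‖ ^ 2 = π / (κ * Real.sinh (π * κ)) := by
  have h := norm_Gamma_I_mul_ofReal_sq (neg_ne_zero.2 hκ)
  rwa [ofReal_neg, mul_neg, mul_neg, Real.sinh_neg, neg_mul_neg] at h

theorem one_sub_exp_neg_two_mul (x : ℝ) :
    1 - rexp (-(2 * x)) = 2 * rexp (-x) * Real.sinh x := by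
  rw [Real.sinh_eq, show -(2 * x) = -x + -x by ring, Real.exp_add, Real.exp_neg]
  field_simp

theorem beta12_modulus_general (κ ξ : ℝ) (r : ℂ) (hκ : 0 < κ)
    (hr : ξ * (norm r) ^ 2 = 1 - Real.exp (-(2 * Real.pi * κ))) :
    (norm
        (((Real.sqrt (2 * Real.pi) : ℂ) * (Real.exp (-(Real.pi * κ) / 2) : ℂ) *
            Complex.exp (Complex.I * (Real.pi : ℂ) / 4)) /
          (-(ξ : ℂ) * (starRingEnd ℂ) r * Complex.Gamma (-(Complex.I * (κ : ℂ)))))) ^ 2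
      = κ / ξ := by
  have hsinh : 0 < Real.sinh (π * κ) := Real.sinh_pos_iff.2 (by positivity)
  rw [mul_assoc, one_sub_exp_neg_two_mul] at hr
  obtain ⟨hξ, hr0⟩ : ξ ≠ 0 ∧ ‖r‖ ^ 2 ≠ 0 := mul_ne_zero_iff.1 (hr ▸ by positivity)
  have hnum : ‖(√(2 * π) : ℂ) * (rexp (-(π * κ) / 2) : ℂ) * cexp (I * π / 4)‖ ^ 2
      = 2 * π * rexp (-(π * κ)) := by
    have hhalf : rexp (-(π * κ) / 2) ^ 2 = rexp (-(π * κ)) := by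
      rw [← Real.exp_nat_mul]; ring_nf
    rw [norm_mul, norm_mul, Complex.norm_exp, norm_real, norm_real,
      Real.norm_of_nonneg (by positivity), Real.norm_of_nonneg (by positivity),
      mul_pow, mul_pow, sq_sqrt (by positivity), hhalf]
    simp
  have hden : ‖-(ξ : ℂ) * conj r * Gamma (-(I * κ))‖ ^ 2
      = ξ ^ 2 * ‖r‖ ^ 2 * (π / (κ * Real.sinh (π * κ))) := by
    rw [norm_mul, norm_mul, mul_pow, mul_pow, norm_neg, norm_real, norm_conj, Real.norm_eq_abs,
      sq_abs, norm_Gamma_neg_I_mul_ofReal_sq hκ.ne']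
  rw [norm_div, div_pow, hnum, hden]
  field_simp
  rw [← hr, mul_div_cancel_right₀ _ hr0]

/-- If κ > 0, ξ ≠ 0, ξ|r|² = 1 - e^{-2πκ} < 1, and
β₁₂ = √(2π) e^{-πκ/2} e^{iπ/4} / (-ξ conj(r) Γ(-iκ)), then |β₁₂|² = κ/ξ. -/
theorem beta12_modulus (κ ξ : ℝ) (r : ℂ) (hκ : 0 < κ) (hξ : ξ ≠ 0)
    (hr : ξ * (norm r) ^ 2 = 1 - Real.exp (-(2 * Real.pi * κ)))
    (hlt : ξ * (norm r) ^ 2 < 1) :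
    (norm
        (((Real.sqrt (2 * Real.pi) : ℂ) * (Real.exp (-(Real.pi * κ) / 2) : ℂ) *
            Complex.exp (Complex.I * (Real.pi : ℂ) / 4)) /
          (-(ξ : ℂ) * (starRingEnd ℂ) r * Complex.Gamma (-(Complex.I * (κ : ℂ)))))) ^ 2
      = κ / ξ :=
  beta12_modulus_general κ ξ r hκ hr
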